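/- arXiv:0904.0817 — 3 statements merged into one kernel-verified Lean document; each statement's English description precedes it below -/
import Mathlib

section
/- Let λ be a strongly inaccessible cardinal, let ⟨θ_ζ : ζ < λ⟩ be a sequence of infinite cardinals with θ_ζ < λ for every ζ < λ, and let κ ≥ λ be a cardinal. If there is a family {g_i : i < κ} ⊆ ∏_{ζ<λ} θ_ζ which is cofinal modulo J^bd_λ (i.e. for every f ∈ ∏_{ζ<λ} θ_ζ there is i < κ with f ≤* g_i), then the space ^λ2 equipped with the <λ-box topology is the union of κ nowhere dense sets (hence cov_λ(meagre) ≤ κ). -/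
open Cardinal Set

/-- The type of ordinals below `o`, serving as the domain `λ` (for `o = λ.ord`). -/
abbrev Blw (o : Ordinal.{0}) := {α : Ordinal.{0} // α < o}

/-- The space `^λ2` of functions from `λ` to `2` (for `o = λ.ord`). -/
abbrev CSp (o : Ordinal.{0}) := Blw o → Bool

/-- The cylinder `[ν] = {η ∈ ^λ2 : ν ⊴ η}` determined by `ν : β → 2`, `β < o`. -/
def cylC (o β : Ordinal.{0}) (ν : Blw β → Bool) : Set (CSp o) :=
  {η | ∀ (α : Ordinal.{0}) (hβ : α < β) (ho : α < o), η ⟨α, ho⟩ = ν ⟨α, hβ⟩}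

/-- The `<λ`-box topology on `^λ2`: generated by the cylinders `[ν]`, `ν : β → 2`,
`β < o` (its open sets are exactly the unions of such cylinders). -/
def boxC (o : Ordinal.{0}) : TopologicalSpace (CSp o) :=
  TopologicalSpace.generateFrom
    {S | ∃ β : Ordinal.{0}, β < o ∧ ∃ ν : Blw β → Bool, S = cylC o β ν}

/-- The product `∏_{ζ<λ} θ_ζ` (for `o = λ.ord`), as the set of functions
`η : λ → Ord` with `η ζ < θ ζ` for all `ζ < λ`. -/
def PSp (o : Ordinal.{0}) (θ : Blw o → Cardinal.{0}) : Type 1 :=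
  {η : Blw o → Ordinal.{0} // ∀ ζ, η ζ < (θ ζ).ord}

/-- The cylinder `[ν] = {η ∈ ∏_{ζ<λ} θ_ζ : ν ⊴ η}` determined by
`ν : ∏_{ζ<β} θ_ζ`, `β < o`. -/
def cylP (o : Ordinal.{0}) (θ : Blw o → Cardinal.{0}) (β : Ordinal.{0})
    (ν : Blw β → Ordinal.{0}) : Set (PSp o θ) :=
  {η | ∀ (α : Ordinal.{0}) (hβ : α < β) (ho : α < o), η.1 ⟨α, ho⟩ = ν ⟨α, hβ⟩}

/-- The `<λ`-box topology on `∏_{ζ<λ} θ_ζ`: generated by the cylinders `[ν]`,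
`ν ∈ ∏_{ζ<β} θ_ζ`, `β < o` (its open sets are exactly the unions of such
cylinders). -/
def boxP (o : Ordinal.{0}) (θ : Blw o → Cardinal.{0}) : TopologicalSpace (PSp o θ) :=
  TopologicalSpace.generateFrom
    {S | ∃ β : Ordinal.{0}, β < o ∧ ∃ ν : Blw β → Ordinal.{0},
      (∀ (α : Ordinal.{0}) (hβ : α < β) (ho : α < o), ν ⟨α, hβ⟩ < (θ ⟨α, ho⟩).ord) ∧
      S = cylP o θ β ν}

/-!
Read `η : λ → 2` as the function `f_η ∈ ∏ θ_ζ` with `f_η ζ` the least `α < θ_ζ` such that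
`η (ζ + α) = 1`. For each `g_i` and `β < λ`, the set of `η` with `f_η ≤ g_i` above `β` is
closed, because `f_η ζ` only depends on `η ↾ (ζ + θ_ζ)`, and it has empty interior, because
any cylinder can be extended by a single `1` at `ζ + g_i ζ + 1` beyond its length and `β`.
Cofinality of the `g_i` says that these `κ · λ = κ` sets cover `^λ2`.
-/

section CodedOrdinals

variable {o : Ordinal.{0}}

theorem cylC_subset_cylC {β₁ β₂ : Ordinal.{0}} (hle : β₁ ≤ β₂) {ν₁ : Blw β₁ → Bool}
    {ν₂ : Blw β₂ → Bool} {x : CSp o} (hx₁ : x ∈ cylC o β₁ ν₁) (hx₂ : x ∈ cylC o β₂ ν₂) :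
    cylC o β₂ ν₂ ⊆ cylC o β₁ ν₁ := fun η hη α hα ho => by
  rw [hη α (hα.trans_le hle) ho, ← hx₂ α (hα.trans_le hle) ho, hx₁ α hα ho]

theorem isTopologicalBasis_cylC (ho : 0 < o) :
    @TopologicalSpace.IsTopologicalBasis (CSp o) (boxC o)
      {S | ∃ β : Ordinal.{0}, β < o ∧ ∃ ν : Blw β → Bool, S = cylC o β ν} := by
  let := boxC o
  refine ⟨?_, ?_, rfl⟩
  · rintro _ ⟨β₁, hβ₁, ν₁, rfl⟩ _ ⟨β₂, hβ₂, ν₂, rfl⟩ x ⟨hx₁, hx₂⟩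
    rcases le_total β₁ β₂ with hle | hle
    · exact ⟨_, ⟨β₂, hβ₂, ν₂, rfl⟩, hx₂, subset_inter (cylC_subset_cylC hle hx₁ hx₂) le_rfl⟩
    · exact ⟨_, ⟨β₁, hβ₁, ν₁, rfl⟩, hx₁, subset_inter le_rfl (cylC_subset_cylC hle hx₂ hx₁)⟩
  · refine eq_univ_of_forall fun x => mem_sUnion.2
      ⟨cylC o 0 fun y => (not_lt_zero y.2).elim, ⟨0, ho, _, rfl⟩, ?_⟩
    exact fun α hα _ => (not_lt_zero hα).elim

/-- The least `α < θ ζ` with `η (ζ + α) = true`, and `0` if there is none. -/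
noncomputable def code (θ : Blw o → Cardinal.{0}) (ζ : Blw o) (η : CSp o) : Ordinal.{0} :=
  sInf {α | α < (θ ζ).ord ∧ ∃ h : ζ.1 + α < o, η ⟨ζ.1 + α, h⟩ = true}

theorem code_lt (θ : Blw o → Cardinal.{0}) (ζ : Blw o) (η : CSp o) (hθ : ℵ₀ ≤ θ ζ) :
    code θ ζ η < (θ ζ).ord := by
  rcases eq_empty_or_nonempty {α | α < (θ ζ).ord ∧ ∃ h : ζ.1 + α < o, η ⟨ζ.1 + α, h⟩ = true}
    with h | h
  · rw [code, h, Ordinal.sInf_empty]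
    exact (isSuccLimit_ord hθ).bot_lt
  · exact (csInf_mem h).1

theorem code_eq_of_mem_cylC (θ : Blw o → Cardinal.{0}) (ζ : Blw o)
    {ν : Blw (ζ.1 + (θ ζ).ord) → Bool} {η₁ η₂ : CSp o}
    (h₁ : η₁ ∈ cylC o _ ν) (h₂ : η₂ ∈ cylC o _ ν) : code θ ζ η₁ = code θ ζ η₂ := by
  have agree : ∀ α < (θ ζ).ord, ∀ h : ζ.1 + α < o, η₁ ⟨ζ.1 + α, h⟩ = η₂ ⟨ζ.1 + α, h⟩ :=
    fun α hα h => by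
      rw [h₁ _ ((add_lt_add_iff_left ζ.1).2 hα) h, h₂ _ ((add_lt_add_iff_left ζ.1).2 hα) h]
  unfold code
  congr 1
  ext α
  exact and_congr_right fun hα => exists_congr fun h => by rw [agree α hα h]

noncomputable def extendSingle (β₀ : Ordinal.{0}) (ν : Blw β₀ → Bool) (γ : Ordinal.{0}) :
    CSp o :=
  fun α => if h : α.1 < β₀ then ν ⟨α.1, h⟩ else decide (α.1 = γ)

theorem extendSingle_mem_cylC (β₀ : Ordinal.{0}) (ν : Blw β₀ → Bool) (γ : Ordinal.{0}) :
    extendSingle β₀ ν γ ∈ cylC o β₀ ν := fun _ hα _ => dif_pos hα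

theorem code_extendSingle (θ : Blw o → Cardinal.{0}) {ζ : Blw o} {β₀ : Ordinal.{0}}
    (ν : Blw β₀ → Bool) (hβ₀ : β₀ ≤ ζ.1) {v : Ordinal.{0}} (hv : v < (θ ζ).ord)
    (hvo : ζ.1 + v < o) : code θ ζ (extendSingle β₀ ν (ζ.1 + v)) = v := by
  have beyond : ∀ α : Ordinal.{0}, ¬ ζ.1 + α < β₀ := fun α =>
    not_lt.2 (hβ₀.trans le_self_add)
  have hset : {α | α < (θ ζ).ord ∧ ∃ h : ζ.1 + α < o,
      extendSingle β₀ ν (ζ.1 + v) ⟨ζ.1 + α, h⟩ = true} = {v} := by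
    ext α
    simp only [extendSingle, dif_neg (beyond _), decide_eq_true_eq, add_right_inj,
      mem_ofPred_eq, mem_singleton_iff]
    exact ⟨fun ⟨_, _, h⟩ => h, by rintro rfl; exact ⟨hv, hvo, rfl⟩⟩
  rw [code, hset, csInf_singleton]

def eventuallyCodeLE (θ : Blw o → Cardinal.{0}) (g : PSp o θ) (β : Ordinal.{0}) :
    Set (CSp o) :=
  {η | ∀ ζ : Blw o, β ≤ ζ.1 → code θ ζ η ≤ g.1 ζ}

open Topology in
theorem isClosed_eventuallyCodeLE (θ : Blw o → Cardinal.{0})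
    (hadd : ∀ ζ : Blw o, ζ.1 + (θ ζ).ord < o) (g : PSp o θ) (β : Ordinal.{0}) :
    IsClosed[boxC o] (eventuallyCodeLE θ g β) := by
  let := boxC o
  refine isOpen_compl_iff.1 (isOpen_iff_forall_mem_open.2 fun η hη => ?_)
  obtain ⟨ζ, hβζ, hgt⟩ : ∃ ζ : Blw o, β ≤ ζ.1 ∧ g.1 ζ < code θ ζ η := by
    simpa [eventuallyCodeLE] using hη
  set ν : Blw (ζ.1 + (θ ζ).ord) → Bool := fun x => η ⟨x.1, x.2.trans (hadd ζ)⟩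
  have hην : η ∈ cylC o _ ν := fun _ _ _ => rfl
  refine ⟨cylC o _ ν, fun η' hη' hle => ?_,
    TopologicalSpace.isOpen_generateFrom_of_mem ⟨_, hadd ζ, ν, rfl⟩, hην⟩
  exact (hle ζ hβζ).not_gt (code_eq_of_mem_cylC θ ζ hη' hην ▸ hgt)

theorem exists_mem_cylC_notMem_eventuallyCodeLE (θ : Blw o → Cardinal.{0})
    (hθ : ∀ ζ, ℵ₀ ≤ θ ζ) (hadd : ∀ ζ : Blw o, ζ.1 + (θ ζ).ord < o) (g : PSp o θ)
    {β β₀ : Ordinal.{0}} (hβ : β < o) (hβ₀ : β₀ < o) (ν : Blw β₀ → Bool) :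
    ∃ η ∈ cylC o β₀ ν, η ∉ eventuallyCodeLE θ g β := by
  set ζ : Blw o := ⟨max β β₀, max_lt hβ hβ₀⟩
  have hv : Order.succ (g.1 ζ) < (θ ζ).ord := (isSuccLimit_ord (hθ ζ)).succ_lt (g.2 ζ)
  refine ⟨extendSingle β₀ ν (ζ.1 + Order.succ (g.1 ζ)), extendSingle_mem_cylC _ _ _,
    fun hmem => ?_⟩
  have hle := hmem ζ (le_max_left β β₀)
  rw [code_extendSingle θ ν (le_max_right β β₀) hv
    (((add_lt_add_iff_left _).2 hv).trans (hadd ζ))] at hle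
  exact (Order.lt_succ _).not_ge hle

theorem isNowhereDense_eventuallyCodeLE (θ : Blw o → Cardinal.{0})
    (hθ : ∀ ζ, ℵ₀ ≤ θ ζ) (hadd : ∀ ζ : Blw o, ζ.1 + (θ ζ).ord < o) (g : PSp o θ)
    {β : Ordinal.{0}} (hβ : β < o) :
    @IsNowhereDense _ (boxC o) (eventuallyCodeLE θ g β) := by
  let := boxC o
  rw [(isClosed_eventuallyCodeLE θ hadd g β).isNowhereDense_iff,
    interior_eq_empty_iff_dense_compl,
    (isTopologicalBasis_cylC (zero_le.trans_lt hβ)).dense_iff]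
  rintro _ ⟨β₀, hβ₀, ν, rfl⟩ -
  exact exists_mem_cylC_notMem_eventuallyCodeLE θ hθ hadd g hβ hβ₀ ν

end CodedOrdinals

theorem nonempty_equiv_blw_prod {κ lam : Cardinal.{0}} (hκ : ℵ₀ ≤ κ) (hlam : lam ≤ κ)
    (hlam0 : lam ≠ 0) : Nonempty (Blw κ.ord ≃ Blw κ.ord × Blw lam.ord) := by
  rw [← Cardinal.eq, mk_prod, lift_id, lift_id]
  change #(Iio κ.ord) = #(Iio κ.ord) * #(Iio lam.ord)
  rw [mk_Iio_ordinal, mk_Iio_ordinal, card_ord, card_ord, ← lift_mul, mul_eq_left hκ hlam hlam0]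

/-- let `λ` be strongly inaccessible, `⟨θ_ζ : ζ < λ⟩` infinite
cardinals below `λ`, and `κ ≥ λ`.  If `{g_i : i < κ} ⊆ ∏_{ζ<λ} θ_ζ` is cofinal
modulo `J^bd_λ`, then `^λ2` with the `<λ`-box topology is the union of `κ`
nowhere dense sets (hence `cov_λ(meagre) ≤ κ`). -/
theorem cantor_union_nowhereDense (lam κ : Cardinal.{0}) (hinacc : lam.IsInaccessible)
    (θ : Blw lam.ord → Cardinal.{0}) (hθ : ∀ ζ, ℵ₀ ≤ θ ζ ∧ θ ζ < lam)
    (hκ : lam ≤ κ)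
    (g : Blw κ.ord → PSp lam.ord θ)
    (hcof : ∀ f : PSp lam.ord θ, ∃ i : Blw κ.ord, ∃ β < lam.ord,
      ∀ ζ : Blw lam.ord, β ≤ ζ.1 → f.1 ζ ≤ (g i).1 ζ) :
    ∃ A : Blw κ.ord → Set (CSp lam.ord),
      (∀ i, @IsNowhereDense _ (boxC lam.ord) (A i)) ∧ (⋃ i, A i) = Set.univ := by
  have hlam : ℵ₀ ≤ lam := hinacc.aleph0_lt.le
  have hadd : ∀ ζ : Blw lam.ord, ζ.1 + (θ ζ).ord < lam.ord := fun ζ =>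
    Ordinal.isPrincipal_add_ord hlam ζ.2 (ord_lt_ord.2 (hθ ζ).2)
  obtain ⟨e⟩ :=
    nonempty_equiv_blw_prod (hlam.trans hκ) hκ (aleph0_pos.trans hinacc.aleph0_lt).ne'
  refine ⟨fun a => eventuallyCodeLE θ (g (e a).1) (e a).2.1,
    fun a => isNowhereDense_eventuallyCodeLE θ (fun ζ => (hθ ζ).1) hadd _ (e a).2.2,
    eq_univ_of_forall fun η => ?_⟩
  obtain ⟨i, β, hβ, hle⟩ := hcof ⟨fun ζ => code θ ζ η, fun ζ => code_lt θ ζ η (hθ ζ).1⟩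
  obtain ⟨a, ha⟩ := e.surjective (i, ⟨β, hβ⟩)
  exact mem_iUnion.2 ⟨a, by simp only [ha]; exact hle⟩
end

section
/- Let λ be a regular uncountable cardinal and ⟨θ_ε : ε < λ⟩ a sequence of infinite cardinals below λ. Then the map F : ^λ2 → ∏_{ε<λ} θ_ε given by F(η)(ε) = 0 if η(s(ε)+i) = 0 for all i < θ_ε, and F(η)(ε) = 1+i where i < θ_ε is least with η(s(ε)+i) = 1 otherwise, is well-defined (in particular s(ε) < λ and 1+i < θ_ε for all i < θ_ε) and continuous with respect to the <λ-box topologies on ^λ2 and on ∏_{ε<λ} θ_ε. -/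
open Cardinal Set

/-- `blockSum t ε = Σ_{ζ<ε} t ζ` (ordinal sum): `0` at `0`, `blockSum t δ + t δ`
at `δ+1`, and the supremum at limits. -/
noncomputable def blockSum (t : Ordinal.{0} → Ordinal.{0}) (ε : Ordinal.{0}) : Ordinal.{0} :=
  Ordinal.limitRecOn ε 0 (fun δ ih => ih + t δ)
    (fun δ _ ih => ⨆ β : Set.Iio δ, ih β.1 β.2)

/-- `sFn lam θ ε = s(ε) = Σ_{ζ<ε} θ_ζ` (ordinal sum). -/
noncomputable def sFn (lam : Cardinal.{0}) (θ : Blw lam.ord → Cardinal.{0}) :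
    Ordinal.{0} → Ordinal.{0} :=
  blockSum (fun ζ => if h : ζ < lam.ord then (θ ⟨ζ, h⟩).ord else 0)

/-- `F : ^λ2 → ∏_{ε<λ} θ_ε` is the block-coding map: `F(η)(ε) = 0` if
`η(s(ε)+i) = 0` for all `i < θ_ε`, and `F(η)(ε) = 1+i` for the least `i < θ_ε`
with `η(s(ε)+i) = 1` otherwise. -/
def FSpec (lam : Cardinal.{0}) (θ : Blw lam.ord → Cardinal.{0})
    (F : CSp lam.ord → PSp lam.ord θ) : Prop :=
  ∀ (η : CSp lam.ord) (ε : Blw lam.ord),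
    ((∀ i < (θ ε).ord, ∀ h : sFn lam θ ε.1 + i < lam.ord,
        η ⟨sFn lam θ ε.1 + i, h⟩ = false) → (F η).1 ε = 0) ∧
    (∀ i < (θ ε).ord, ∀ h : sFn lam θ ε.1 + i < lam.ord,
        η ⟨sFn lam θ ε.1 + i, h⟩ = true →
        (∀ j < i, ∀ h' : sFn lam θ ε.1 + j < lam.ord,
          η ⟨sFn lam θ ε.1 + j, h'⟩ = false) →
        (F η).1 ε = 1 + i)

/-! Regularity of `λ` keeps every block offset `s(ε)` below `λ`: ordinals below `λ` are closed under
`+` (successor steps), and a supremum of fewer than `λ` of them stays below `λ` (limit steps).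
The `ε`-th coordinate of `F(η)` only reads the block `[s(ε), s(ε+1))` of `η`, so `F(η)↾β` is
determined by `η↾s(β)`; as `s(β) < λ`, this is continuity for the `<λ`-box topologies. -/

theorem one_add_lt_ord {c : Cardinal.{0}} (hc : ℵ₀ ≤ c) {i : Ordinal.{0}} (hi : i < c.ord) :
    1 + i < c.ord :=
  Ordinal.isPrincipal_add_ord hc (Ordinal.one_lt_omega0.trans_le (Cardinal.omega0_le_ord.mpr hc)) hi

section BlockSum

variable (t : Ordinal.{0} → Ordinal.{0})

theorem blockSum_zero : blockSum t 0 = 0 :=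
  Ordinal.limitRecOn_zero ..

theorem blockSum_add_one (δ : Ordinal.{0}) : blockSum t (δ + 1) = blockSum t δ + t δ :=
  Ordinal.limitRecOn_add_one ..

theorem blockSum_limit {δ : Ordinal.{0}} (h : Order.IsSuccLimit δ) :
    blockSum t δ = ⨆ β : Iio δ, blockSum t β.1 :=
  Ordinal.limitRecOn_limit _ _ _ _ h

theorem blockSum_monotone : Monotone (blockSum t) := by
  intro ε ε' hε
  induction ε' using Ordinal.limitRecOn with
  | zero => rw [le_zero_iff.mp hε]
  | add_one δ ih =>
    rcases hε.eq_or_lt with rfl | hlt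
    · exact le_rfl
    · rw [blockSum_add_one]
      exact (ih (Order.lt_add_one_iff.mp hlt)).trans le_self_add
  | limit δ hδ _ =>
    rcases hε.eq_or_lt with rfl | hlt
    · exact le_rfl
    · rw [blockSum_limit t hδ]
      exact Ordinal.le_iSup (fun β : Iio δ => blockSum t β.1) ⟨ε, hlt⟩

theorem add_lt_blockSum {ε β i : Ordinal.{0}} (hεβ : ε < β) (hi : i < t ε) :
    blockSum t ε + i < blockSum t β :=
  calc blockSum t ε + i < blockSum t (ε + 1) := by rwa [blockSum_add_one, add_lt_add_iff_left]
    _ ≤ blockSum t β := blockSum_monotone t (Order.add_one_le_of_lt hεβ)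

theorem blockSum_lt_ord {c : Cardinal.{0}} (hc : c.IsRegular) (ht : ∀ ζ < c.ord, t ζ < c.ord) :
    ∀ ε < c.ord, blockSum t ε < c.ord := by
  intro ε
  induction ε using Ordinal.limitRecOn with
  | zero =>
    intro h
    rwa [blockSum_zero]
  | add_one δ ih =>
    intro h
    have hδ : δ < c.ord := (Order.lt_add_one_iff.mpr le_rfl).trans h
    rw [blockSum_add_one]
    exact Ordinal.isPrincipal_add_ord hc.aleph0_le (ih hδ) (ht δ hδ)
  | limit δ hδ ih =>
    intro h
    rw [blockSum_limit t hδ]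
    refine Ordinal.lift_iSup_lt_of_lt_cof ?_ fun β => ih β.1 β.2 (β.2.trans h)
    simpa [← Ordinal.lift_card, ← Cardinal.lift_ord, ← Ordinal.lift_cof, hc.cof_ord] using
      Cardinal.lt_ord.mp h

end BlockSum

section BlockCode

variable {lam : Cardinal.{0}} (θ : Blw lam.ord → Cardinal.{0})

theorem sFn_lt_ord (hreg : lam.IsRegular) (hθ : ∀ ζ, θ ζ < lam) {ε : Ordinal.{0}}
    (hε : ε < lam.ord) : sFn lam θ ε < lam.ord := by
  refine blockSum_lt_ord _ hreg (fun ζ hζ => ?_) ε hε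
  rw [dif_pos hζ]
  exact Cardinal.ord_lt_ord.mpr (hθ _)

theorem sFn_add_lt_sFn {ε : Blw lam.ord} {β i : Ordinal.{0}} (hεβ : ε.1 < β)
    (hi : i < (θ ε).ord) : sFn lam θ ε.1 + i < sFn lam θ β :=
  add_lt_blockSum _ hεβ (by rwa [dif_pos ε.2])

def blockOnes (η : CSp lam.ord) (ε : Blw lam.ord) : Set Ordinal.{0} :=
  {i | ∃ (_ : i < (θ ε).ord) (h : sFn lam θ ε.1 + i < lam.ord), η ⟨sFn lam θ ε.1 + i, h⟩ = true}

open Classical in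
noncomputable def blockCodeVal (η : CSp lam.ord) (ε : Blw lam.ord) : Ordinal.{0} :=
  if (blockOnes θ η ε).Nonempty then 1 + sInf (blockOnes θ η ε) else 0

theorem blockCodeVal_lt (hθ : ∀ ζ, ℵ₀ ≤ θ ζ) (η : CSp lam.ord) (ε : Blw lam.ord) :
    blockCodeVal θ η ε < (θ ε).ord := by
  rw [blockCodeVal]
  split_ifs with h
  · exact one_add_lt_ord (hθ ε) (csInf_mem h).1
  · exact Ordinal.omega0_pos.trans_le (Cardinal.omega0_le_ord.mpr (hθ ε))

theorem blockCodeVal_congr {β : Ordinal.{0}} {η η' : CSp lam.ord}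
    (hag : ∀ (α : Ordinal.{0}) (_ : α < sFn lam θ β) (ho : α < lam.ord), η' ⟨α, ho⟩ = η ⟨α, ho⟩)
    {ε : Blw lam.ord} (hεβ : ε.1 < β) : blockCodeVal θ η' ε = blockCodeVal θ η ε := by
  have hsame : blockOnes θ η' ε = blockOnes θ η ε := by
    ext i
    refine exists_congr fun hi => exists_congr fun h => ?_
    rw [hag _ (sFn_add_lt_sFn θ hεβ hi) h]
  rw [blockCodeVal, blockCodeVal, hsame]

noncomputable def blockCode (hθ : ∀ ζ, ℵ₀ ≤ θ ζ) (η : CSp lam.ord) : PSp lam.ord θ :=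
  ⟨blockCodeVal θ η, blockCodeVal_lt θ hθ η⟩

theorem fSpec_blockCode (hθ : ∀ ζ, ℵ₀ ≤ θ ζ) : FSpec lam θ (blockCode θ hθ) := by
  intro η ε
  constructor
  · intro hzero
    refine if_neg ?_
    rintro ⟨i, hi, h, hone⟩
    simp [hzero i hi h] at hone
  · intro i hi h hone hmin
    have hne : (blockOnes θ η ε).Nonempty := ⟨i, hi, h, hone⟩
    show blockCodeVal θ η ε = 1 + i
    rw [blockCodeVal, if_pos hne]
    congr 1
    refine le_antisymm (csInf_le' ⟨hi, h, hone⟩) (le_csInf hne ?_)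
    rintro j ⟨-, hj, hjone⟩
    by_contra! hji
    simp [hmin j hji hj] at hjone

end BlockCode

theorem continuous_box_of_agree_below {o : Ordinal.{0}} {θ : Blw o → Cardinal.{0}}
    (F : CSp o → PSp o θ)
    (hF : ∀ β < o, ∃ γ < o, ∀ η η' : CSp o,
      (∀ (α : Ordinal.{0}) (_ : α < γ) (ho : α < o), η' ⟨α, ho⟩ = η ⟨α, ho⟩) →
      ∀ ε : Blw o, ε.1 < β → (F η').1 ε = (F η).1 ε) :
    @Continuous _ _ (boxC o) (boxP o θ) F := by
  let _ := boxC o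
  rw [boxP, continuous_generateFrom_iff]
  rintro _ ⟨β, hβ, ν, -, rfl⟩
  obtain ⟨γ, hγ, hagree⟩ := hF β hβ
  refine isOpen_iff_forall_mem_open.mpr fun η hη => ⟨cylC o γ (fun α => η ⟨α.1, α.2.trans hγ⟩),
    fun η' hη' α hαβ ho => ?_, TopologicalSpace.isOpen_generateFrom_of_mem ⟨γ, hγ, _, rfl⟩,
    fun _ _ _ => rfl⟩
  rw [hagree η η' hη' ⟨α, ho⟩ hαβ]
  exact hη α hαβ ho

theorem blockCoding_welldefined_continuous_general (lam : Cardinal.{0}) (hreg : lam.IsRegular)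
    (θ : Blw lam.ord → Cardinal.{0})
    (hθ : ∀ ζ, ℵ₀ ≤ θ ζ ∧ θ ζ < lam) :
    (∀ ε : Blw lam.ord, sFn lam θ ε.1 < lam.ord) ∧
    (∀ ε : Blw lam.ord, ∀ i < (θ ε).ord,
        1 + i < (θ ε).ord ∧ sFn lam θ ε.1 + i < lam.ord) ∧
    ∃ F : CSp lam.ord → PSp lam.ord θ, FSpec lam θ F ∧
      @Continuous _ _ (boxC lam.ord) (boxP lam.ord θ) F := by
  have hs : ∀ {ε}, ε < lam.ord → sFn lam θ ε < lam.ord := sFn_lt_ord θ hreg fun ζ => (hθ ζ).2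
  have hinf : ∀ ζ, ℵ₀ ≤ θ ζ := fun ζ => (hθ ζ).1
  refine ⟨fun ε => hs ε.2, fun ε i hi => ⟨one_add_lt_ord (hinf ε) hi, ?_⟩, blockCode θ hinf,
    fSpec_blockCode θ hinf, continuous_box_of_agree_below _ fun β hβ =>
      ⟨sFn lam θ β, hs hβ, fun _ _ hag _ hεβ => blockCodeVal_congr θ hag hεβ⟩⟩
  exact Ordinal.isPrincipal_add_ord hreg.aleph0_le (hs ε.2)
    (hi.trans (Cardinal.ord_lt_ord.mpr (hθ ε).2))

/-- for `λ` regular uncountable and `⟨θ_ε : ε < λ⟩` infinite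
cardinals below `λ`, the block-coding map `F : ^λ2 → ∏_{ε<λ} θ_ε` is
well-defined (in particular `s(ε) < λ`, `s(ε)+i < λ` and `1+i < θ_ε` for all
`i < θ_ε`) and continuous with respect to the `<λ`-box topologies. -/
theorem blockCoding_welldefined_continuous (lam : Cardinal.{0}) (hreg : lam.IsRegular)
    (hunc : ℵ₀ < lam) (θ : Blw lam.ord → Cardinal.{0})
    (hθ : ∀ ζ, ℵ₀ ≤ θ ζ ∧ θ ζ < lam) :
    (∀ ε : Blw lam.ord, sFn lam θ ε.1 < lam.ord) ∧
    (∀ ε : Blw lam.ord, ∀ i < (θ ε).ord,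
        1 + i < (θ ε).ord ∧ sFn lam θ ε.1 + i < lam.ord) ∧
    ∃ F : CSp lam.ord → PSp lam.ord θ, FSpec lam θ F ∧
      @Continuous _ _ (boxC lam.ord) (boxP lam.ord θ) F :=
  blockCoding_welldefined_continuous_general lam hreg θ hθ
end

section
/- Let λ be a regular uncountable cardinal and ⟨θ_ζ : ζ < λ⟩ a sequence of regular infinite cardinals with θ_ζ > |ζ| for every ζ < λ (for instance θ_ζ = (2^{|ζ|+ℵ₀})⁺). Let δ < λ and let ⟨p_α : α < δ⟩ be a ≤-increasing sequence in the θ̄-dominating forcing Q_θ̄ such that lg(η^{p_α}) ≥ α for every α < δ. Then the sequence ⟨p_α : α < δ⟩ has a least upper bound in Q_θ̄. -/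
/-!
The least upper bound has trunk length `ε = sup_α lg(η^{p_α})` and function the pointwise
supremum of the `f^{p_α}`; `ε < λ` by regularity of `λ`. Below `ε` the sequence is eventually
constant at each coordinate, since trunks extend one another. At `ζ ≥ ε`, `lg(η^{p_α}) ≥ α`
forces `δ ≤ ζ + 1`, so the supremum is over `|δ| < θ_ζ = cf θ_ζ` values and stays below `θ_ζ`.
-/

open Cardinal Set

/-- A condition in the `θ̄`-dominating forcing `Q_θ̄` (for `o = λ.ord`): a pair
`(η, f)` with `f ∈ ∏_{ζ<λ} θ_ζ` and `η = f ↾ len` its trunk (an initial segment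
of `f` of some length `len < λ`, so `η ∈ ∏_{ζ<len} θ_ζ`).  Since `η ⊴ f`, the
condition is determined by the pair `(len, f)`; the trunk is `η^p ζ = p.f ζ`
for `ζ < p.len`. -/
structure QTh (o : Ordinal.{0}) (θ : Blw o → Cardinal.{0}) where
  /-- the length `lg(η^p)` of the trunk -/
  len : Ordinal.{0}
  len_lt : len < o
  /-- the function `f^p ∈ ∏_{ζ<λ} θ_ζ` -/
  f : Blw o → Ordinal.{0}
  f_lt : ∀ ζ, f ζ < (θ ζ).ord

/-- The order on `Q_θ̄`: (a) `η^p ⊴ η^q`, (b) `f^p ≤ f^q` pointwise, and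
(c) `η^q(ζ) ≥ f^p(ζ)` for `lg(η^p) ≤ ζ < lg(η^q)`. -/
def QTh.Le (o : Ordinal.{0}) (θ : Blw o → Cardinal.{0}) (p q : QTh o θ) : Prop :=
  (p.len ≤ q.len ∧ ∀ ζ : Blw o, ζ.1 < p.len → q.f ζ = p.f ζ)
  ∧ (∀ ζ : Blw o, p.f ζ ≤ q.f ζ)
  ∧ (∀ ζ : Blw o, p.len ≤ ζ.1 → ζ.1 < q.len → p.f ζ ≤ q.f ζ)

instance Ordinal.small_subtype_lt (δ : Ordinal.{u}) : Small.{u} {α : Ordinal.{u} // α < δ} :=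
  Ordinal.small_Iio δ

theorem Ordinal.iSup_lt_of_card_lt_cof {δ a : Ordinal.{u}}
    {g : {α : Ordinal.{u} // α < δ} → Ordinal.{u}} (hδ : δ.card < a.cof) (hg : ∀ i, g i < a) :
    ⨆ i, g i < a := by
  refine Ordinal.lift_iSup_lt_of_lt_cof.{u, u + 1} ?_ hg
  have hmk : #{α // α < δ} = Cardinal.lift.{u + 1} δ.card := Cardinal.mk_Iio_ordinal δ
  rwa [hmk, Cardinal.lift_lift, ← Ordinal.lift_cof, Cardinal.lift_lt]

namespace QTh

variable {o : Ordinal.{0}} {θ : Blw o → Cardinal.{0}}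

section Sup

variable {ι : Type*} [LinearOrder ι] [Small.{0} ι] {p : ι → QTh o θ}

theorem iSup_f_eq_of_lt_len (hp : ∀ i j, i ≤ j → QTh.Le o θ (p i) (p j)) {i : ι} {ζ : Blw o}
    (hζ : ζ.1 < (p i).len) : ⨆ j, (p j).f ζ = (p i).f ζ := by
  refine le_antisymm (Ordinal.iSup_le fun j => ?_) (Ordinal.le_iSup (fun j => (p j).f ζ) i)
  rcases le_total j i with hji | hij
  · exact (hp j i hji).2.1 ζ
  · exact ((hp i j hij).1.2 ζ hζ).le

noncomputable def sup (p : ι → QTh o θ) (hlen : ⨆ i, (p i).len < o)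
    (hf : ∀ ζ, ⨆ i, (p i).f ζ < (θ ζ).ord) : QTh o θ :=
  ⟨⨆ i, (p i).len, hlen, fun ζ => ⨆ i, (p i).f ζ, hf⟩

variable (hp : ∀ i j, i ≤ j → QTh.Le o θ (p i) (p j)) (hlen : ⨆ i, (p i).len < o)
  (hf : ∀ ζ, ⨆ i, (p i).f ζ < (θ ζ).ord)
include hp

theorem le_sup (i : ι) : QTh.Le o θ (p i) (sup p hlen hf) :=
  ⟨⟨Ordinal.le_iSup (fun i => (p i).len) i, fun _ hζ => iSup_f_eq_of_lt_len hp hζ⟩,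
    fun ζ => Ordinal.le_iSup (fun i => (p i).f ζ) i,
    fun ζ _ _ => Ordinal.le_iSup (fun i => (p i).f ζ) i⟩

theorem sup_le {r : QTh o θ} (hr : ∀ i, QTh.Le o θ (p i) r) : QTh.Le o θ (sup p hlen hf) r := by
  refine ⟨⟨Ordinal.iSup_le fun i => (hr i).1.1, fun ζ hζ => ?_⟩,
    fun ζ => Ordinal.iSup_le fun i => (hr i).2.1 ζ,
    fun ζ _ _ => Ordinal.iSup_le fun i => (hr i).2.1 ζ⟩
  obtain ⟨i, hi⟩ := Ordinal.lt_iSup_iff.mp hζ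
  exact ((hr i).1.2 ζ hi).trans (iSup_f_eq_of_lt_len hp hi).symm

end Sup

variable {δ : Ordinal.{0}} {p : Blw δ → QTh o θ}

theorem iSup_len_lt (hδ : δ.card < o.cof) : ⨆ a, (p a).len < o :=
  Ordinal.iSup_lt_of_card_lt_cof hδ fun a => (p a).len_lt

theorem iSup_f_lt (hp : ∀ a b, a ≤ b → QTh.Le o θ (p a) (p b))
    (hlen : ∀ a : Blw δ, a.1 ≤ (p a).len)
    {ζ : Blw o} (hθ : (θ ζ).IsRegular) (hζ : ζ.1.card < θ ζ) : ⨆ a, (p a).f ζ < (θ ζ).ord := by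
  rcases lt_or_ge ζ.1 (⨆ a, (p a).len) with hlt | hge
  · obtain ⟨a, ha⟩ := Ordinal.lt_iSup_iff.mp hlt
    rw [iSup_f_eq_of_lt_len hp ha]
    exact (p a).f_lt ζ
  · have hδζ : δ ≤ ζ.1 + 1 := le_of_forall_lt fun a ha => Order.lt_add_one_iff.mpr <|
      (hlen ⟨a, ha⟩).trans ((Ordinal.le_iSup (fun a => (p a).len) _).trans hge)
    have hζθ : ζ.1 + 1 < (θ ζ).ord := (isSuccLimit_ord hθ.aleph0_le).add_one_lt (lt_ord.mpr hζ)
    refine Ordinal.iSup_lt_of_card_lt_cof ?_ fun a => (p a).f_lt ζ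
    rw [hθ.cof_ord, ← lt_ord]
    exact hδζ.trans_lt hζθ

end QTh

theorem qth_increasing_lub_general (lam : Cardinal.{0}) (hreg : lam.IsRegular)
    (θ : Blw lam.ord → Cardinal.{0})
    (hθ : ∀ ζ : Blw lam.ord, (θ ζ).IsRegular ∧ ζ.1.card < θ ζ)
    (δ : Ordinal.{0}) (hδ : δ < lam.ord)
    (p : Blw δ → QTh lam.ord θ)
    (hinc : ∀ a b : Blw δ, a.1 ≤ b.1 → QTh.Le lam.ord θ (p a) (p b))
    (hlen : ∀ a : Blw δ, a.1 ≤ (p a).len) :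
    ∃ q : QTh lam.ord θ, (∀ a, QTh.Le lam.ord θ (p a) q) ∧
      ∀ r : QTh lam.ord θ, (∀ a, QTh.Le lam.ord θ (p a) r) → QTh.Le lam.ord θ q r := by
  have hlenlt : ⨆ a, (p a).len < lam.ord :=
    QTh.iSup_len_lt (by rwa [hreg.cof_ord, ← lt_ord])
  have hflt (ζ) : ⨆ a, (p a).f ζ < (θ ζ).ord := QTh.iSup_f_lt hinc hlen (hθ ζ).1 (hθ ζ).2
  exact ⟨QTh.sup p hlenlt hflt, QTh.le_sup hinc hlenlt hflt, fun _ => QTh.sup_le hinc hlenlt hflt⟩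

/-- for `λ` regular uncountable and `θ_ζ` regular infinite cardinals
with `θ_ζ > |ζ|`, every `≤`-increasing sequence `⟨p_α : α < δ⟩` (with `δ < λ`) in
`Q_θ̄` whose trunks satisfy `lg(η^{p_α}) ≥ α` has a least upper bound in `Q_θ̄`. -/
theorem qth_increasing_lub (lam : Cardinal.{0}) (hreg : lam.IsRegular) (hunc : ℵ₀ < lam)
    (θ : Blw lam.ord → Cardinal.{0})
    (hθ : ∀ ζ : Blw lam.ord, (θ ζ).IsRegular ∧ ζ.1.card < θ ζ)
    (δ : Ordinal.{0}) (hδ : δ < lam.ord)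
    (p : Blw δ → QTh lam.ord θ)
    (hinc : ∀ a b : Blw δ, a.1 ≤ b.1 → QTh.Le lam.ord θ (p a) (p b))
    (hlen : ∀ a : Blw δ, a.1 ≤ (p a).len) :
    ∃ q : QTh lam.ord θ, (∀ a, QTh.Le lam.ord θ (p a) q) ∧
      ∀ r : QTh lam.ord θ, (∀ a, QTh.Le lam.ord θ (p a) r) → QTh.Le lam.ord θ q r :=
  qth_increasing_lub_general lam hreg θ hθ δ hδ p hinc hlen
end
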